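/- arXiv:1307.1828 — 2 statements merged into one kernel-verified Lean document; each statement's English description precedes it below -/
import Mathlib

section
/- Let k ≥ 1 and q ≥ 1 be integers, let S_1, …, S_k and y_1, …, y_q be real numbers, and set T = S_1 + ⋯ + S_k + y_1 + ⋯ + y_q. Then Σ_{1≤r<s≤q} y_r y_s + (Σ_{j=1}^k S_j)(Σ_{r=1}^q y_r) + Σ_{1≤ℓ<j≤k} S_ℓ S_j − Σ_{s=1}^q y_s² ≤ ((q + 3k − 3)/(2(q + 3k))) · T², with equality if and only if S_j = 3 y_s for all j ∈ {1,…,k} and all s ∈ {1,…,q}. -/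
set_option maxHeartbeats 1000000

open Finset

private lemma sum_linear {n : ℕ} (c d e : ℝ) (f : Fin n → ℝ) :
    ∑ i, (c * (f i)^2 + d * f i + e) =
      c * (∑ i, (f i)^2) + d * (∑ i, f i) + (n : ℝ) * e := by
  rw [Finset.sum_add_distrib, Finset.sum_add_distrib, ← Finset.mul_sum, ← Finset.mul_sum,
    Finset.sum_const, Finset.card_univ, Fintype.card_fin, nsmul_eq_mul]

private lemma tri_sq {n : ℕ} (f : Fin n → ℝ) :
    (∑ r, f r)^2 =
      2 * (∑ r, ∑ s ∈ Finset.univ.filter (fun s => r < s), f r * f s) + ∑ r, (f r)^2 := by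
  have h1 : (∑ r, f r)^2 = ∑ r, ∑ s, f r * f s := by
    rw [sq, Finset.sum_mul_sum]
  have hpt : ∀ r s : Fin n, f r * f s =
      (if r < s then f r * f s else 0) + (if s < r then f r * f s else 0) +
        (if r = s then f r * f s else 0) := by
    intro r s
    rcases lt_trichotomy r s with h | h | h
    · simp [h, not_lt_of_gt h, h.ne]
    · simp [h]
    · simp [h, not_lt_of_gt h, (ne_of_gt h)]
  have h2 : ∑ r, ∑ s, f r * f s =
      (∑ r, ∑ s, if r < s then f r * f s else 0) +
      (∑ r, ∑ s, if s < r then f r * f s else 0) +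
      (∑ r, ∑ s, if r = s then f r * f s else 0) := by
    rw [← Finset.sum_add_distrib, ← Finset.sum_add_distrib]
    refine Finset.sum_congr rfl fun r _ => ?_
    rw [← Finset.sum_add_distrib, ← Finset.sum_add_distrib]
    exact Finset.sum_congr rfl fun s _ => hpt r s
  have h3 : (∑ r, ∑ s, if s < r then f r * f s else 0) =
      ∑ r, ∑ s, if r < s then f r * f s else 0 := by
    rw [Finset.sum_comm]
    refine Finset.sum_congr rfl fun r _ => Finset.sum_congr rfl fun s _ => ?_
    by_cases h : r < s <;> by_cases h' : s < r <;> simp [h, h', mul_comm]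
  have h4 : (∑ r, ∑ s, if r = s then f r * f s else 0) = ∑ r, (f r)^2 := by
    refine Finset.sum_congr rfl fun r _ => ?_
    rw [Finset.sum_ite_eq (Finset.univ) r (fun s => f r * f s)]
    simp [sq]
  have h5 : (∑ r, ∑ s ∈ Finset.univ.filter (fun s => r < s), f r * f s) =
      ∑ r, ∑ s, if r < s then f r * f s else 0 := by
    refine Finset.sum_congr rfl fun r _ => ?_
    rw [Finset.sum_filter]
  rw [h1, h2, h3, h4, h5]; ring

theorem stmt_2 (k q : ℕ) (hk : 1 ≤ k) (hq : 1 ≤ q)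
    (S : Fin k → ℝ) (y : Fin q → ℝ)
    (T : ℝ) (hT : T = (∑ j, S j) + ∑ r, y r) :
    ((∑ r : Fin q, ∑ s ∈ Finset.univ.filter (fun s => r < s), y r * y s) +
        (∑ j, S j) * (∑ r, y r) +
        (∑ l : Fin k, ∑ j ∈ Finset.univ.filter (fun j => l < j), S l * S j) -
        ∑ s, (y s)^2 ≤
      (((q : ℝ) + 3*k - 3) / (2*((q : ℝ) + 3*k))) * T^2) ∧
    (((∑ r : Fin q, ∑ s ∈ Finset.univ.filter (fun s => r < s), y r * y s) +
        (∑ j, S j) * (∑ r, y r) +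
        (∑ l : Fin k, ∑ j ∈ Finset.univ.filter (fun j => l < j), S l * S j) -
        ∑ s, (y s)^2 =
      (((q : ℝ) + 3*k - 3) / (2*((q : ℝ) + 3*k))) * T^2) ↔
      ∀ (j : Fin k) (s : Fin q), S j = 3 * y s) := by
  set A : ℝ := ∑ j, S j with hA
  set B : ℝ := ∑ r, y r with hB
  set P : ℝ := ∑ j, (S j)^2 with hP
  set Q : ℝ := ∑ s, (y s)^2 with hQ
  set U : ℝ := ∑ r : Fin q, ∑ s ∈ Finset.univ.filter (fun s => r < s), y r * y s with hU
  set V : ℝ := ∑ l : Fin k, ∑ j ∈ Finset.univ.filter (fun j => l < j), S l * S j with hV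
  set n : ℝ := (q : ℝ) with hn
  set m : ℝ := (k : ℝ) with hm
  have hn1 : (1:ℝ) ≤ n := by rw [hn]; exact_mod_cast hq
  have hm1 : (1:ℝ) ≤ m := by rw [hm]; exact_mod_cast hk
  have hUeq : B^2 = 2*U + Q := tri_sq y
  have hVeq : A^2 = 2*V + P := tri_sq S
  set E1 : ℝ := ∑ j, ∑ r, (S j - 3*y r)^2 with hE1def
  set E2 : ℝ := ∑ r, ∑ s, (y r - y s)^2 with hE2def
  set E3 : ℝ := ∑ l, ∑ j, (S l - S j)^2 with hE3def
  have hE1 : E1 = n*P - 6*A*B + 9*m*Q := by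
    rw [hE1def]
    have inner : ∀ j : Fin k, ∑ r, (S j - 3*y r)^2 = n*(S j)^2 + (-6*B)*(S j) + 9*Q := by
      intro j
      have e1 : ∑ r : Fin q, (S j - 3*y r)^2 =
          ∑ r : Fin q, (9*(y r)^2 + (-6*(S j))*(y r) + (S j)^2) :=
        Finset.sum_congr rfl fun r _ => by ring
      rw [e1, sum_linear, ← hQ, ← hB, ← hn]; ring
    have e2 : ∑ j, ∑ r, (S j - 3*y r)^2 =
        ∑ j, (n*(S j)^2 + (-6*B)*(S j) + 9*Q) :=
      Finset.sum_congr rfl fun j _ => inner j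
    rw [e2, sum_linear, ← hP, ← hA, ← hm]; ring
  have hE2 : E2 = 2*n*Q - 2*B^2 := by
    rw [hE2def]
    have inner : ∀ r : Fin q, ∑ s, (y r - y s)^2 = 1*(y r)^2*n + (-2*B)*(y r) + Q := by
      intro r
      have e1 : ∑ s : Fin q, (y r - y s)^2 =
          ∑ s : Fin q, (1*(y s)^2 + (-2*(y r))*(y s) + (y r)^2) :=
        Finset.sum_congr rfl fun s _ => by ring
      rw [e1, sum_linear, ← hQ, ← hB, ← hn]; ring
    have e2 : ∑ r, ∑ s, (y r - y s)^2 = ∑ r, (n*(y r)^2 + (-2*B)*(y r) + Q) :=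
      Finset.sum_congr rfl fun r _ => by rw [inner r]; ring
    rw [e2, sum_linear, ← hQ, ← hB, ← hn]; ring
  have hE3 : E3 = 2*m*P - 2*A^2 := by
    rw [hE3def]
    have inner : ∀ l : Fin k, ∑ j, (S l - S j)^2 = m*(S l)^2 + (-2*A)*(S l) + P := by
      intro l
      have e1 : ∑ j : Fin k, (S l - S j)^2 =
          ∑ j : Fin k, (1*(S j)^2 + (-2*(S l))*(S j) + (S l)^2) :=
        Finset.sum_congr rfl fun j _ => by ring
      rw [e1, sum_linear, ← hP, ← hA, ← hm]; ring
    have e2 : ∑ l, ∑ j, (S l - S j)^2 = ∑ l, (m*(S l)^2 + (-2*A)*(S l) + P) :=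
      Finset.sum_congr rfl fun l _ => inner l
    rw [e2, sum_linear, ← hP, ← hA, ← hm]; ring
  set E : ℝ := E1 + (3/2)*E2 + (3/2)*E3 with hEdef
  have hden : (0:ℝ) < 2*(n + 3*m) := by linarith
  have hne : (2*(n + 3*m)) ≠ 0 := ne_of_gt hden
  have hU2 : U = (B^2 - Q)/2 := by linarith
  have hV2 : V = (A^2 - P)/2 := by linarith
  have key2 : 2*(n + 3*m) *
      (((n + 3*m - 3) / (2*(n + 3*m))) * T^2 - (U + A*B + V - Q)) = E := by
    rw [hEdef, hE1, hE2, hE3, hT, hU2, hV2]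
    field_simp
    ring
  have key : ((n + 3*m - 3) / (2*(n + 3*m))) * T^2 - (U + A*B + V - Q) =
      E / (2*(n + 3*m)) := by
    rw [eq_div_iff hne]; linear_combination key2
  have hE1nonneg : 0 ≤ E1 := by rw [hE1def]; positivity
  have hE2nonneg : 0 ≤ E2 := by rw [hE2def]; positivity
  have hE3nonneg : 0 ≤ E3 := by rw [hE3def]; positivity
  have hEnonneg : 0 ≤ E := by rw [hEdef]; linarith
  constructor
  · have := div_nonneg hEnonneg hden.le
    linarith [key]
  · constructor
    · intro heq
      have hE0 : E = 0 := by
        have hz : E / (2*(n + 3*m)) = 0 := by linarith [key]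
        rcases div_eq_zero_iff.mp hz with h | h
        · exact h
        · exact absurd h hne
      have hE10 : E1 = 0 := by rw [hEdef] at hE0; linarith
      intro j s
      have h1 : ∀ j ∈ (Finset.univ : Finset (Fin k)), (0:ℝ) ≤ ∑ r, (S j - 3*y r)^2 := by
        intro j _; positivity
      have h2 := (Finset.sum_eq_zero_iff_of_nonneg h1).mp hE10 j (Finset.mem_univ j)
      have h3 : ∀ r ∈ (Finset.univ : Finset (Fin q)), (0:ℝ) ≤ (S j - 3*y r)^2 := by
        intro r _; positivity
      have h4 := (Finset.sum_eq_zero_iff_of_nonneg h3).mp h2 s (Finset.mem_univ s)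
      have := sq_eq_zero_iff.mp h4
      linarith
    · intro h
      have hj0 : Fin k := ⟨0, hk⟩
      have hr0 : Fin q := ⟨0, hq⟩
      have hyconst : ∀ r s : Fin q, y r = y s := by
        intro r s
        have h1 := h hj0 r
        have h2 := h hj0 s
        linarith
      have hSconst : ∀ l j : Fin k, S l = S j := by
        intro l j
        have h1 := h l hr0
        have h2 := h j hr0
        linarith
      have hE10 : E1 = 0 := by
        rw [hE1def]
        refine Finset.sum_eq_zero fun j _ => Finset.sum_eq_zero fun r _ => ?_
        rw [h j r]; ring
      have hE20 : E2 = 0 := by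
        rw [hE2def]
        refine Finset.sum_eq_zero fun r _ => Finset.sum_eq_zero fun s _ => ?_
        rw [hyconst r s]; ring
      have hE30 : E3 = 0 := by
        rw [hE3def]
        refine Finset.sum_eq_zero fun l _ => Finset.sum_eq_zero fun j _ => ?_
        rw [hSconst l j]; ring
      have hE0 : E = 0 := by rw [hEdef, hE10, hE20, hE30]; ring
      rw [hE0] at key
      simp at key
      linarith [key]
end

section
/- Let k ≥ 1 be an integer, n_1, …, n_k ≥ 2 integers, q ≥ 1 an integer, and A = Σ_{i=1}^k 1/(2 + n_i) with A ≤ 1/3. Let x_{i,α} (for 1 ≤ i ≤ k, 1 ≤ α ≤ n_i) and y_1, …, y_q be real numbers, with y_q the distinguished entry. Set X_i = Σ_{α=1}^{n_i} x_{i,α}, M = q + 3k, and T = Σ_{i,α} x_{i,α} + Σ_{r=1}^q y_r. Then Σ_{1≤r<s≤q} y_r y_s + (Σ_i X_i)(Σ_r y_r) + Σ_{i<j} X_i X_j − Σ_{s=1}^{q−1} y_s² − Σ_{i,α} x_{i,α}² ≤ ((M − 1 − 6A)/(2(M + 2 − 6A))) · T², with equality if and only if y_q = (2 + n_i) x_{i,α}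 = 3 y_s for every i, every α ∈ {1,…,n_i}, and every s ∈ {1,…,q−1}. -/
/-!
Write `T` for the total sum and `D = M + 2 - 6A`. The left-hand side equals `(T² - Q) / 2` for the
positive definite form `Q = y_q² + 3 ∑_{s<q} y_s² + ∑_i (X_i² + 2 ∑_α x_{i,α}²)`, so the claim is
`3 T² ≤ D Q`. For every `λ`, each of the pieces `y_q²`, `3 y_s²`, `X_i² + 2 ∑_α x_{i,α}²` of `Q`
dominates its tangent `2 λ · (linear part) - λ² · (weight)`, with equality exactly when `y_q = λ`,
`3 y_s = λ`, resp. `(2 + n_i) x_{i,α} = λ`. The weights `1`, `1/3`, `n_i / (2 + n_i)` add up to `D / 3`,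
so `Q ≥ 2 λ T - λ² D / 3` for all `λ`, and `λ = 3 T / D` gives the inequality. Equality forces
tangency at some `λ`, which is then `y_q`.
-/

open Finset

theorem sq_sum_eq_sum_sq_add_two_mul_sum_lt {ι R : Type*} [Fintype ι] [LinearOrder ι]
    [CommSemiring R] (f : ι → R) :
    (∑ i, f i) ^ 2 = ∑ i, f i ^ 2 + 2 * ∑ i, ∑ j ∈ univ.filter (fun j => i < j), f i * f j := by
  have split (i j : ι) : f i * f j = (if i < j then f i * f j else 0) +
      (if i = j then f i ^ 2 else 0) + (if j < i then f j * f i else 0) := by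
    rcases lt_trichotomy i j with h | rfl | h
    · simp [h, h.ne, h.not_gt]
    · simp [sq]
    · simp [h, h.ne', h.not_gt, mul_comm]
  rw [sq, sum_mul_sum, sum_congr rfl fun i _ => sum_congr rfl fun j _ => split i j]
  simp only [sum_add_distrib, sum_ite_eq, mem_univ, if_true]
  rw [sum_comm (s := univ) (t := univ) (f := fun i j => if j < i then f j * f i else 0)]
  simp only [← sum_filter]
  ring

theorem sum_pair_products_sub_eq {ι σ : Type*} [Fintype ι] [LinearOrder ι] [Fintype σ]
    [LinearOrder σ] (X : ι → ℝ) (y : σ → ℝ) (t : σ) (c : ℝ) :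
    (∑ r, ∑ s ∈ univ.filter (fun s => r < s), y r * y s) + (∑ i, X i) * (∑ r, y r) +
        (∑ i, ∑ j ∈ univ.filter (fun j => i < j), X i * X j) - (∑ s ∈ univ.erase t, y s ^ 2) - c =
      ((∑ i, X i + ∑ r, y r) ^ 2
        - (y t ^ 2 + 3 * ∑ s ∈ univ.erase t, y s ^ 2 + ∑ i, X i ^ 2 + 2 * c)) / 2 := by
  have hy2 := add_sum_erase univ (fun r => y r ^ 2) (mem_univ t)
  linear_combination (-1/2) * sq_sum_eq_sum_sq_add_two_mul_sum_lt y
    + (-1/2) * sq_sum_eq_sum_sq_add_two_mul_sum_lt X + (1/2) * hy2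

theorem two_mul_mul_sub_sq_div_le_mul_sq {c : ℝ} (hc : 0 < c) (l y : ℝ) :
    2 * l * y - l ^ 2 / c ≤ c * y ^ 2 := by
  have h : c * y ^ 2 - (2 * l * y - l ^ 2 / c) = (c * y - l) ^ 2 / c := by
    field_simp; ring
  linarith [div_nonneg (sq_nonneg (c * y - l)) hc.le]

theorem two_mul_mul_sub_sq_div_eq_mul_sq_iff {c : ℝ} (hc : 0 < c) (l y : ℝ) :
    2 * l * y - l ^ 2 / c = c * y ^ 2 ↔ l = c * y := by
  have h : c * y ^ 2 - (2 * l * y - l ^ 2 / c) = (c * y - l) ^ 2 / c := by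
    field_simp; ring
  rw [eq_comm, ← sub_eq_zero, h, div_eq_zero_iff, or_iff_left hc.ne', sq_eq_zero_iff, sub_eq_zero,
    eq_comm]

section Block

variable {κ : Type*} [Fintype κ] (x : κ → ℝ) (l : ℝ)

theorem sq_sum_add_two_mul_sum_sq_sub_two_mul_mul_sum_eq :
    (∑ α, x α) ^ 2 + 2 * ∑ α, x α ^ 2
        - (2 * l * ∑ α, x α - l ^ 2 * (Fintype.card κ / (2 + Fintype.card κ))) =
      2 * ∑ α, (x α - l / (2 + Fintype.card κ)) ^ 2
        + (∑ α, x α - Fintype.card κ * (l / (2 + Fintype.card κ))) ^ 2 := by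
  simp only [sub_sq, sum_add_distrib, sum_sub_distrib, ← mul_sum, ← sum_mul, sum_const, card_univ,
    nsmul_eq_mul]
  field_simp
  ring

theorem two_mul_mul_sum_sub_le_sq_sum_add_two_mul_sum_sq :
    2 * l * ∑ α, x α - l ^ 2 * (Fintype.card κ / (2 + Fintype.card κ)) ≤
      (∑ α, x α) ^ 2 + 2 * ∑ α, x α ^ 2 := by
  have := sq_sum_add_two_mul_sum_sq_sub_two_mul_mul_sum_eq x l
  have : 0 ≤ ∑ α, (x α - l / (2 + Fintype.card κ)) ^ 2 := sum_nonneg fun _ _ => sq_nonneg _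
  linarith [sq_nonneg (∑ α, x α - Fintype.card κ * (l / (2 + Fintype.card κ)))]

theorem two_mul_mul_sum_sub_eq_sq_sum_add_two_mul_sum_sq_iff :
    2 * l * ∑ α, x α - l ^ 2 * (Fintype.card κ / (2 + Fintype.card κ)) =
        (∑ α, x α) ^ 2 + 2 * ∑ α, x α ^ 2 ↔ ∀ α, l = (2 + Fintype.card κ) * x α := by
  have hN : (0 : ℝ) < 2 + Fintype.card κ := by positivity
  have hmean (α : κ) : l = (2 + Fintype.card κ) * x α ↔ x α - l / (2 + Fintype.card κ) = 0 := by
    rw [sub_eq_zero, eq_div_iff hN.ne', mul_comm, eq_comm]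
  rw [eq_comm, ← sub_eq_zero, sq_sum_add_two_mul_sum_sq_sub_two_mul_mul_sum_eq,
    add_eq_zero_iff_of_nonneg (by positivity) (sq_nonneg _), mul_eq_zero, or_iff_right two_ne_zero,
    sum_eq_zero_iff_of_nonneg fun _ _ => sq_nonneg _]
  simp only [mem_univ, true_implies, sq_eq_zero_iff, hmean]
  refine ⟨And.left, fun h => ⟨h, ?_⟩⟩
  rw [sum_congr rfl fun α _ => sub_eq_zero.mp (h α)]
  simp

end Block

section Tangent

variable {ι σ : Type*} [Fintype ι] (n : ι → ℕ) (x : (i : ι) → Fin (n i) → ℝ) (S : Finset σ)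
  (y : σ → ℝ) (z l : ℝ)

theorem two_mul_mul_sum_sub_eq_sum_tangents :
    2 * l * (z + ∑ s ∈ S, y s + ∑ i, ∑ α, x i α)
        - l ^ 2 * (1 + #S / 3 + ∑ i, (n i : ℝ) / (2 + n i)) =
      (2 * l * z - l ^ 2 / 1) + ∑ s ∈ S, (2 * l * y s - l ^ 2 / 3)
        + ∑ i, (2 * l * ∑ α, x i α
          - l ^ 2 * (Fintype.card (Fin (n i)) / (2 + Fintype.card (Fin (n i))))) := by
  simp only [sum_sub_distrib, ← mul_sum, sum_const, nsmul_eq_mul, Fintype.card_fin]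
  ring

theorem quadratic_eq_sum_pieces :
    z ^ 2 + 3 * ∑ s ∈ S, y s ^ 2 + ∑ i, (∑ α, x i α) ^ 2 + 2 * ∑ i, ∑ α, x i α ^ 2 =
      1 * z ^ 2 + ∑ s ∈ S, 3 * y s ^ 2 + ∑ i, ((∑ α, x i α) ^ 2 + 2 * ∑ α, x i α ^ 2) := by
  simp only [sum_add_distrib, mul_sum]
  ring

theorem two_mul_mul_sum_sub_le_quadratic :
    2 * l * (z + ∑ s ∈ S, y s + ∑ i, ∑ α, x i α)
        - l ^ 2 * (1 + #S / 3 + ∑ i, (n i : ℝ) / (2 + n i)) ≤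
      z ^ 2 + 3 * ∑ s ∈ S, y s ^ 2 + ∑ i, (∑ α, x i α) ^ 2 + 2 * ∑ i, ∑ α, x i α ^ 2 := by
  rw [two_mul_mul_sum_sub_eq_sum_tangents, quadratic_eq_sum_pieces]
  gcongr with s _ i _
  · exact two_mul_mul_sub_sq_div_le_mul_sq one_pos l z
  · exact two_mul_mul_sub_sq_div_le_mul_sq three_pos l (y s)
  · exact two_mul_mul_sum_sub_le_sq_sum_add_two_mul_sum_sq (x i) l

theorem two_mul_mul_sum_sub_eq_quadratic_iff :
    2 * l * (z + ∑ s ∈ S, y s + ∑ i, ∑ α, x i α)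
        - l ^ 2 * (1 + #S / 3 + ∑ i, (n i : ℝ) / (2 + n i)) =
      z ^ 2 + 3 * ∑ s ∈ S, y s ^ 2 + ∑ i, (∑ α, x i α) ^ 2 + 2 * ∑ i, ∑ α, x i α ^ 2 ↔
      l = z ∧ (∀ s ∈ S, l = 3 * y s) ∧ ∀ i α, l = (2 + n i) * x i α := by
  have hz := two_mul_mul_sub_sq_div_le_mul_sq one_pos l z
  have hy s := two_mul_mul_sub_sq_div_le_mul_sq three_pos l (y s)
  have hx i := two_mul_mul_sum_sub_le_sq_sum_add_two_mul_sum_sq (x i) l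
  rw [two_mul_mul_sum_sub_eq_sum_tangents, quadratic_eq_sum_pieces,
    add_eq_add_iff_eq_and_eq (add_le_add hz (sum_le_sum fun s _ => hy s))
      (sum_le_sum fun i _ => hx i),
    add_eq_add_iff_eq_and_eq hz (sum_le_sum fun s _ => hy s),
    sum_eq_sum_iff_of_le fun i _ => hx i, sum_eq_sum_iff_of_le fun s _ => hy s,
    two_mul_mul_sub_sq_div_eq_mul_sq_iff one_pos, one_mul]
  simp only [two_mul_mul_sub_sq_div_eq_mul_sq_iff three_pos,
    two_mul_mul_sum_sub_eq_sq_sum_add_two_mul_sum_sq_iff]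
  simp only [Fintype.card_fin, mem_univ, true_implies, and_assoc]

end Tangent

theorem sq_div_le_of_forall_le {T W Q : ℝ} (hW : 0 < W) (h : ∀ l, 2 * l * T - l ^ 2 * W ≤ Q) :
    T ^ 2 / W ≤ Q :=
  calc T ^ 2 / W = 2 * (T / W) * T - (T / W) ^ 2 * W := by field_simp; ring
    _ ≤ Q := h _

theorem eq_sq_div_iff_exists {T W Q : ℝ} (hW : 0 < W) (h : ∀ l, 2 * l * T - l ^ 2 * W ≤ Q) :
    Q = T ^ 2 / W ↔ ∃ l, 2 * l * T - l ^ 2 * W = Q := by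
  refine ⟨fun hQ => ⟨T / W, by rw [hQ]; field_simp; ring⟩, fun ⟨l, hl⟩ => ?_⟩
  refine le_antisymm ?_ (sq_div_le_of_forall_le hW h)
  have : T ^ 2 / W - (2 * l * T - l ^ 2 * W) = (T - l * W) ^ 2 / W := by field_simp; ring
  rw [← hl]
  linarith [div_nonneg (sq_nonneg (T - l * W)) hW.le]

theorem sum_natCast_div_two_add {ι : Type*} [Fintype ι] (n : ι → ℕ) :
    ∑ i, (n i : ℝ) / (2 + n i) = Fintype.card ι - 2 * ∑ i, 1 / (2 + (n i : ℝ)) := by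
  have h (i : ι) : (n i : ℝ) / (2 + n i) = 1 - 2 * (1 / (2 + n i)) := by
    field_simp; ring
  simp only [h, sum_sub_distrib, ← mul_sum, sum_const, card_univ, nsmul_eq_mul, mul_one]

theorem Fin.filter_val_lt_eq_erase {q : ℕ} (t : Fin q) (ht : (t : ℕ) = q - 1) :
    univ.filter (fun s : Fin q => (s : ℕ) < q - 1) = univ.erase t := by
  ext s
  simp only [mem_filter, mem_univ, true_and, mem_erase, ne_eq, Fin.ext_iff, and_true]
  have := s.isLt
  omega

theorem stmt_3 (k : ℕ) (n : Fin k → ℕ)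
    (q : ℕ) (hq : 1 ≤ q)
    (A : ℝ) (hA : A = ∑ i, 1/(2 + (n i : ℝ)))
    (x : (i : Fin k) → Fin (n i) → ℝ) (y : Fin q → ℝ)
    (X : Fin k → ℝ) (hX : ∀ i, X i = ∑ α, x i α)
    (M : ℝ) (hM : M = (q : ℝ) + 3*k)
    (T : ℝ) (hT : T = (∑ i, ∑ α, x i α) + ∑ r, y r) :
    ((∑ r : Fin q, ∑ s ∈ Finset.univ.filter (fun s => r < s), y r * y s) +
        (∑ i, X i) * (∑ r, y r) +
        (∑ i : Fin k, ∑ j ∈ Finset.univ.filter (fun j => i < j), X i * X j) -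
        (∑ s ∈ Finset.univ.filter (fun s : Fin q => (s : ℕ) < q - 1), (y s)^2) -
        (∑ i, ∑ α, (x i α)^2) ≤
      ((M - 1 - 6*A) / (2*(M + 2 - 6*A))) * T^2) ∧
    (((∑ r : Fin q, ∑ s ∈ Finset.univ.filter (fun s => r < s), y r * y s) +
        (∑ i, X i) * (∑ r, y r) +
        (∑ i : Fin k, ∑ j ∈ Finset.univ.filter (fun j => i < j), X i * X j) -
        (∑ s ∈ Finset.univ.filter (fun s : Fin q => (s : ℕ) < q - 1), (y s)^2) -
        (∑ i, ∑ α, (x i α)^2) =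
      ((M - 1 - 6*A) / (2*(M + 2 - 6*A))) * T^2) ↔
      ((∀ (i : Fin k) (α : Fin (n i)),
          y ⟨q - 1, by omega⟩ = (2 + (n i : ℝ)) * x i α) ∧
        (∀ s : Fin q, (s : ℕ) < q - 1 → y ⟨q - 1, by omega⟩ = 3 * y s))) := by
  set t : Fin q := ⟨q - 1, by omega⟩
  have hS := Fin.filter_val_lt_eq_erase t rfl
  rw [hS, sum_pair_products_sub_eq]
  set S := univ.erase t
  set W : ℝ := 1 + #S / 3 + ∑ i, (n i : ℝ) / (2 + n i) with hW
  set Q := y t ^ 2 + 3 * ∑ s ∈ S, y s ^ 2 + ∑ i, X i ^ 2 + 2 * ∑ i, ∑ α, x i α ^ 2 with hQ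
  have hTS : y t + ∑ s ∈ S, y s + ∑ i, X i = T := by
    rw [hT, ← add_sum_erase univ y (mem_univ t)]; simp only [hX]; ring
  have hle (l : ℝ) : 2 * l * T - l ^ 2 * W ≤ Q := by
    simpa only [← hX, hTS] using two_mul_mul_sum_sub_le_quadratic n x S y (y t) l
  have hWpos : 0 < W := by positivity
  have hW3 : M + 2 - 6 * A = 3 * W := by
    rw [hM, hA, hW, sum_natCast_div_two_add, card_erase_of_mem (mem_univ t), card_univ,
      Fintype.card_fin, Fintype.card_fin, Nat.cast_sub hq]
    ring
  have hRHS : (M - 1 - 6 * A) / (2 * (M + 2 - 6 * A)) * T ^ 2 = (T ^ 2 - T ^ 2 / W) / 2 := by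
    rw [show M - 1 - 6 * A = 3 * W - 3 by linarith, hW3]
    field_simp
  have hmem (s : Fin q) : s ∈ S ↔ (s : ℕ) < q - 1 := by
    rw [← hS, mem_filter, and_iff_right (mem_univ s)]
  have hXT : ∑ i, X i + ∑ r, y r = T := by simp only [hT, hX]
  rw [hXT, hRHS]
  refine ⟨by linarith [sq_div_le_of_forall_le hWpos hle], ?_⟩
  rw [div_left_inj' two_ne_zero, sub_right_inj, eq_sq_div_iff_exists hWpos hle]
  simp only [← hTS, hW, hQ, hX, two_mul_mul_sum_sub_eq_quadratic_iff, hmem]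
  exact ⟨fun ⟨_, hl, hs, hi⟩ => hl ▸ ⟨hi, hs⟩, fun ⟨hi, hs⟩ => ⟨y t, rfl, hs, hi⟩⟩
end
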